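/- Let A be a finite-dimensional dialgebra that is the direct sum of ideals A = A_1 ⊕ ... ⊕ A_n. Then the Frattini ideal satisfies φ(A) = φ(A_1) ⊕ ... ⊕ φ(A_n). -/

import Mathlib

/-!  Framework: dialgebras and Poisson algebras as bilinear structures on a module. -/

variable {F P : Type*} [Field F] [AddCommGroup P] [Module F P]

/-- A dialgebra: a vector space with two bilinear multiplications. -/
structure Dialgebra (F P : Type*) [Field F] [AddCommGroup P] [Module F P] where
  mul : P →ₗ[F] P →ₗ[F] P
  bracket : P →ₗ[F] P →ₗ[F] P

namespace Dialgebra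

variable (D : Dialgebra F P)

/-- Span of the set of products `a·b`, `a ∈ A`, `b ∈ B`. -/
def pmul (A B : Submodule F P) : Submodule F P :=
  Submodule.span F (Set.image2 (fun a b => D.mul a b) (A : Set P) (B : Set P))

/-- Span of the set of brackets `[a,b]`, `a ∈ A`, `b ∈ B`. -/
def pbra (A B : Submodule F P) : Submodule F P :=
  Submodule.span F (Set.image2 (fun a b => D.bracket a b) (A : Set P) (B : Set P))

/-- `A·B + [A,B]`. -/
def psq (A B : Submodule F P) : Submodule F P := D.pmul A B ⊔ D.pbra A B

/-- A subalgebra: a subspace closed under both products. -/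
def IsSubalgebra (A : Submodule F P) : Prop := D.psq A A ≤ A

/-- An ideal of the dialgebra. -/
def IsIdeal (A : Submodule F P) : Prop :=
  D.pmul A ⊤ ≤ A ∧ D.pmul ⊤ A ≤ A ∧ D.pbra A ⊤ ≤ A ∧ D.pbra ⊤ A ≤ A

/-- `A` is an ideal of the subalgebra `U`. -/
def IsIdealIn (A U : Submodule F P) : Prop :=
  A ≤ U ∧ D.pmul A U ≤ A ∧ D.pmul U A ≤ A ∧ D.pbra A U ≤ A ∧ D.pbra U A ≤ A

/-- Lower central series of `B`: `B^1 = B`, `B^{n+1} = B^n·B + [B^n,B]`. -/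
def lcs (B : Submodule F P) : ℕ → Submodule F P
  | 0 => B
  | n + 1 => D.psq (lcs B n) B

/-- `B` is nilpotent as a dialgebra. -/
def IsNilpotentSub (B : Submodule F P) : Prop := ∃ n, D.lcs B n = ⊥

/-- Derived series of `B`. -/
def ders (B : Submodule F P) : ℕ → Submodule F P
  | 0 => B
  | n + 1 => D.psq (ders B n) (ders B n)

/-- `B` is solvable as a dialgebra. -/
def IsSolvableSub (B : Submodule F P) : Prop := ∃ n, D.ders B n = ⊥

/-- Associative powers: `apow B n = B_A^{n+1}`, i.e. `apow B 0 = B_A^1 = B`. -/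
def apow (B : Submodule F P) : ℕ → Submodule F P
  | 0 => B
  | n + 1 => D.pmul (apow B n) B

/-- Lie powers: `lpow B n = B_L^{n+1}`. -/
def lpow (B : Submodule F P) : ℕ → Submodule F P
  | 0 => B
  | n + 1 => D.pbra (lpow B n) B

/-- Associative nilpotency of `B`. -/
def AssocNilpotent (B : Submodule F P) : Prop := ∃ n, D.apow B n = ⊥

/-- Lie nilpotency of `B`. -/
def LieNilpotent (B : Submodule F P) : Prop := ∃ n, D.lpow B n = ⊥

/-- `mulPows B X n = X·B_A^n` (with the convention that it is `X` for `n = 0`). -/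
def mulPows (B X : Submodule F P) : ℕ → Submodule F P
  | 0 => X
  | n + 1 => D.pmul (mulPows B X n) B

/-- `M` is a maximal (proper) subalgebra of the subalgebra `U`. -/
def IsMaximalSubalgebraIn (U M : Submodule F P) : Prop :=
  D.IsSubalgebra M ∧ M < U ∧ ∀ K, D.IsSubalgebra K → M ≤ K → K ≤ U → K = M ∨ K = U

/-- Frattini subalgebra of the subalgebra `U`: intersection of its maximal subalgebras. -/
def frattiniIn (U : Submodule F P) : Submodule F P :=
  U ⊓ sInf {M | D.IsMaximalSubalgebraIn U M}

/-- Frattini ideal of the subalgebra `U`: largest ideal of `U` inside `frattiniIn U`. -/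
def phiIn (U : Submodule F P) : Submodule F P :=
  sSup {I | D.IsIdealIn I U ∧ I ≤ D.frattiniIn U}

/-- Frattini subalgebra of the dialgebra. -/
def frattini : Submodule F P := D.frattiniIn ⊤

/-- Frattini ideal of the dialgebra. -/
def phi : Submodule F P := sSup {I | D.IsIdeal I ∧ I ≤ D.frattini}

/-- Minimal ideal. -/
def IsMinimalIdeal (A : Submodule F P) : Prop :=
  D.IsIdeal A ∧ A ≠ ⊥ ∧ ∀ I, D.IsIdeal I → I ≤ A → I = ⊥ ∨ I = A

/-- Zero (trivial-multiplication) subspace. -/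
def IsZeroAlg (A : Submodule F P) : Prop := D.pmul A A = ⊥ ∧ D.pbra A A = ⊥

/-- Zero socle: sum of the minimal zero ideals. -/
def zsoc : Submodule F P := sSup {A | D.IsMinimalIdeal A ∧ D.IsZeroAlg A}

/-- Socle: sum of the minimal ideals. -/
def soc : Submodule F P := sSup {A | D.IsMinimalIdeal A}

/-- Annihilator of `B` in the algebra. -/
def annih (B : Submodule F P) : Submodule F P where
  carrier := {x | ∀ b ∈ B, D.mul x b = 0 ∧ D.bracket x b = 0}
  add_mem' := by
    intro x y hx hy b hb
    have h1 := hx b hb; have h2 := hy b hb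
    constructor <;> simp [map_add, LinearMap.add_apply, h1.1, h1.2, h2.1, h2.2]
  zero_mem' := by intro b hb; simp
  smul_mem' := by
    intro c x hx b hb
    have h := hx b hb
    constructor <;> simp [map_smul, LinearMap.smul_apply, h.1, h.2]

/-- `R` is the solvable radical: the largest solvable ideal. -/
def IsRadical (R : Submodule F P) : Prop :=
  D.IsIdeal R ∧ D.IsSolvableSub R ∧ ∀ I, D.IsIdeal I → D.IsSolvableSub I → I ≤ R

/-- `N` is the nilradical: the largest nilpotent ideal. -/
def IsNilradical (N : Submodule F P) : Prop :=
  D.IsIdeal N ∧ D.IsNilpotentSub N ∧ ∀ I, D.IsIdeal I → D.IsNilpotentSub I → I ≤ N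

end Dialgebra

/-- A Poisson algebra: commutative associative product and Lie bracket linked by the Leibniz rule. -/
structure PoissonAlgebra (F P : Type*) [Field F] [AddCommGroup P] [Module F P]
    extends Dialgebra F P where
  mul_comm : ∀ x y, mul x y = mul y x
  mul_assoc : ∀ x y z, mul (mul x y) z = mul x (mul y z)
  lie_self : ∀ x, bracket x x = 0
  leibniz_lie : ∀ x y z, bracket x (bracket y z) = bracket (bracket x y) z + bracket y (bracket x z)
  leibniz : ∀ x y z, bracket (mul x y) z = mul (bracket x z) y + mul x (bracket y z)

/-
Write `A = B ⊕ C` with `B`, `C` ideals, so that `B·C = C·B = 0`. Then ideals of `B` are ideals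
of `A`, and `M ↦ M ⊕ C` sends maximal subalgebras of `B` to maximal subalgebras of `A`.
Hence the projection `B ∩ (φ(A) + C)` of `φ(A)` to `B` is an ideal of `B` contained in every
maximal subalgebra `M` of `B` (as `φ(A) ≤ M ⊕ C`), which gives `φ(A) ≤ ⊕ φ(A_i)`.
Conversely an ideal `I` of `A` inside `F(S)` for a subalgebra `S` lies in `F(A)`: if `I ⊄ M`
with `M` maximal, then `M + I = A`, so `S = I + M ∩ S`, and a maximal subalgebra of `S`
containing `M ∩ S` would contain `I ≤ F(S)` and hence all of `S`. For `I = φ(B)` this gives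
`φ(B) ≤ φ(A)`.
-/

section IsCompl

variable {α : Type*} [Lattice α] [BoundedOrder α] [IsModularLattice α] {b c x : α}

theorem IsCompl.sup_inf_eq_of_le (h : IsCompl b c) (hx : x ≤ b) : (x ⊔ c) ⊓ b = x := by
  rw [sup_inf_assoc_of_le c hx, h.symm.inf_eq_bot, sup_bot_eq]

theorem IsCompl.inf_sup_eq_of_le (h : IsCompl b c) (hx : c ≤ x) : b ⊓ x ⊔ c = x := by
  rw [inf_comm, inf_sup_assoc_of_le b hx, h.sup_eq_top, inf_top_eq]

end IsCompl

namespace Submodule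

variable {R M ι : Type*} [Ring R] [AddCommGroup M] [Module R M]

theorem le_iSup_inf_sup_iSup_ne {A : ι → Submodule R M} {X : Submodule R M}
    (hX : X ≤ ⨆ i, A i) : X ≤ ⨆ i, A i ⊓ (X ⊔ ⨆ (j) (_ : j ≠ i), A j) := by
  classical
  intro x hx
  obtain ⟨f, hf, hsum⟩ := (mem_iSup_iff_exists_finsupp A x).1 (hX hx)
  rw [← hsum, Finsupp.sum]
  refine sum_mem fun i hi => mem_iSup_of_mem i (mem_inf.2 ⟨hf i, ?_⟩)
  have hfi : f i = x - ∑ j ∈ f.support.erase i, f j := by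
    rw [← hsum, Finsupp.sum, ← Finset.add_sum_erase _ _ hi, add_sub_cancel_right]
  rw [hfi]
  exact sub_mem (mem_sup_left hx) <| mem_sup_right <| sum_mem fun j hj =>
    mem_iSup_of_mem j <| mem_iSup_of_mem (Finset.ne_of_mem_erase hj) (hf j)

end Submodule

namespace Dialgebra

open Submodule

variable {D : Dialgebra F P} {B C I J M S U : Submodule F P}

variable (D) in
def products : Set (P →ₗ[F] P →ₗ[F] P) := {D.mul, D.bracket}

theorem pmul_eq_map₂ (X Y : Submodule F P) : D.pmul X Y = map₂ D.mul X Y :=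
  (map₂_eq_span_image2 _ _ _).symm

theorem pbra_eq_map₂ (X Y : Submodule F P) : D.pbra X Y = map₂ D.bracket X Y :=
  (map₂_eq_span_image2 _ _ _).symm

theorem isSubalgebra_iff : D.IsSubalgebra S ↔ ∀ f ∈ D.products, map₂ f S S ≤ S := by
  simp [IsSubalgebra, psq, pmul_eq_map₂, pbra_eq_map₂, products]

theorem isIdeal_iff :
    D.IsIdeal I ↔ ∀ f ∈ D.products, map₂ f I ⊤ ≤ I ∧ map₂ f ⊤ I ≤ I := by
  simp [IsIdeal, pmul_eq_map₂, pbra_eq_map₂, products, and_assoc]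

theorem isIdealIn_iff : D.IsIdealIn I U ↔
    I ≤ U ∧ ∀ f ∈ D.products, map₂ f I U ≤ I ∧ map₂ f U I ≤ I := by
  simp [IsIdealIn, pmul_eq_map₂, pbra_eq_map₂, products, and_assoc]

theorem IsIdeal.isSubalgebra (hI : D.IsIdeal I) : D.IsSubalgebra I :=
  isSubalgebra_iff.2 fun f hf => (map₂_le_map₂_right le_top).trans (isIdeal_iff.1 hI f hf).1

theorem IsSubalgebra.inf (hS : D.IsSubalgebra S) (hU : D.IsSubalgebra U) :
    D.IsSubalgebra (S ⊓ U) :=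
  isSubalgebra_iff.2 fun f hf =>
    le_inf ((map₂_le_map₂ inf_le_left inf_le_left).trans (isSubalgebra_iff.1 hS f hf))
      ((map₂_le_map₂ inf_le_right inf_le_right).trans (isSubalgebra_iff.1 hU f hf))

theorem IsSubalgebra.sup_isIdeal (hS : D.IsSubalgebra S) (hI : D.IsIdeal I) :
    D.IsSubalgebra (S ⊔ I) := by
  refine isSubalgebra_iff.2 fun f hf => ?_
  obtain ⟨hIl, hIr⟩ := isIdeal_iff.1 hI f hf
  rw [map₂_sup_left, map₂_sup_right]
  exact sup_le (sup_le (le_sup_of_le_left (isSubalgebra_iff.1 hS f hf))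
      (le_sup_of_le_right ((map₂_le_map₂_left le_top).trans hIr)))
    (le_sup_of_le_right ((map₂_le_map₂_right le_top).trans hIl))

theorem IsIdeal.sup (hI : D.IsIdeal I) (hJ : D.IsIdeal J) : D.IsIdeal (I ⊔ J) := by
  refine isIdeal_iff.2 fun f hf => ?_
  obtain ⟨hIl, hIr⟩ := isIdeal_iff.1 hI f hf
  obtain ⟨hJl, hJr⟩ := isIdeal_iff.1 hJ f hf
  rw [map₂_sup_left, map₂_sup_right]
  exact ⟨sup_le_sup hIl hJl, sup_le_sup hIr hJr⟩

theorem isIdeal_iSup {ι : Sort*} {A : ι → Submodule F P} (hA : ∀ i, D.IsIdeal (A i)) :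
    D.IsIdeal (⨆ i, A i) := by
  refine isIdeal_iff.2 fun f hf => ?_
  rw [map₂_iSup_left, map₂_iSup_right]
  exact ⟨iSup_mono fun i => (isIdeal_iff.1 (hA i) f hf).1,
    iSup_mono fun i => (isIdeal_iff.1 (hA i) f hf).2⟩

theorem IsIdeal.isIdealIn_inf (hI : D.IsIdeal I) (hU : D.IsSubalgebra U) :
    D.IsIdealIn (U ⊓ I) U := by
  refine isIdealIn_iff.2 ⟨inf_le_left, fun f hf => ?_⟩
  have hUU := isSubalgebra_iff.1 hU f hf
  obtain ⟨hIl, hIr⟩ := isIdeal_iff.1 hI f hf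
  exact ⟨le_inf ((map₂_le_map₂_left inf_le_left).trans hUU)
      ((map₂_le_map₂ inf_le_right le_top).trans hIl),
    le_inf ((map₂_le_map₂_right inf_le_left).trans hUU)
      ((map₂_le_map₂ le_top inf_le_right).trans hIr)⟩

theorem map₂_eq_bot_of_disjoint (hB : D.IsIdeal B) (hC : D.IsIdeal C) (hBC : Disjoint B C)
    {f : P →ₗ[F] P →ₗ[F] P} (hf : f ∈ D.products) : map₂ f B C = ⊥ :=
  eq_bot_iff.2 <| (le_inf ((map₂_le_map₂_right le_top).trans (isIdeal_iff.1 hB f hf).1)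
    ((map₂_le_map₂_left le_top).trans (isIdeal_iff.1 hC f hf).2)).trans hBC.le_bot

theorem IsIdealIn.isIdeal_of_isCompl (hJ : D.IsIdealIn J B) (hB : D.IsIdeal B)
    (hC : D.IsIdeal C) (hBC : IsCompl B C) : D.IsIdeal J := by
  obtain ⟨hJB, hJ⟩ := isIdealIn_iff.1 hJ
  refine isIdeal_iff.2 fun f hf => ?_
  have hJC : map₂ f J C = ⊥ := eq_bot_iff.2 <|
    (map₂_le_map₂_left hJB).trans (map₂_eq_bot_of_disjoint hB hC hBC.disjoint hf).le
  have hCJ : map₂ f C J = ⊥ := eq_bot_iff.2 <|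
    (map₂_le_map₂_right hJB).trans (map₂_eq_bot_of_disjoint hC hB hBC.symm.disjoint hf).le
  rw [← hBC.sup_eq_top, map₂_sup_left, map₂_sup_right, hJC, hCJ, sup_bot_eq, sup_bot_eq]
  exact hJ f hf

theorem IsMaximalSubalgebraIn.sup_of_isCompl (hM : D.IsMaximalSubalgebraIn B M)
    (hB : D.IsIdeal B) (hC : D.IsIdeal C) (hBC : IsCompl B C) :
    D.IsMaximalSubalgebraIn ⊤ (M ⊔ C) := by
  obtain ⟨hMsub, hMB, hMmax⟩ := hM
  refine ⟨hMsub.sup_isIdeal hC, lt_top_iff_ne_top.2 fun htop => hMB.ne ?_, fun K hK hMK _ => ?_⟩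
  · rw [← hBC.sup_inf_eq_of_le hMB.le, htop, top_inf_eq]
  · have hK_eq : K = B ⊓ K ⊔ C := (hBC.inf_sup_eq_of_le (le_sup_right.trans hMK)).symm
    rcases hMmax (B ⊓ K) (hB.isSubalgebra.inf hK) (le_inf hMB.le (le_sup_left.trans hMK))
      inf_le_left with h | h
    · exact .inl (by rw [hK_eq, h])
    · exact .inr (by rw [hK_eq, h, hBC.sup_eq_top])

theorem exists_isMaximalSubalgebraIn_of_lt [FiniteDimensional F P] (hS : D.IsSubalgebra S)
    (hSU : S < U) : ∃ M, D.IsMaximalSubalgebraIn U M ∧ S ≤ M := by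
  obtain ⟨M, ⟨hMsub, hSM, hMU⟩, hmax⟩ := (wellFounded_gt (α := Submodule F P)).has_min
    {K | D.IsSubalgebra K ∧ S ≤ K ∧ K < U} ⟨S, hS, le_rfl, hSU⟩
  refine ⟨M, ⟨hMsub, hMU, fun K hK hMK hKU => ?_⟩, hSM⟩
  by_contra! hne
  exact hmax K ⟨hK, hSM.trans hMK, hKU.lt_of_ne hne.2⟩ (hMK.lt_of_ne hne.1.symm)

theorem le_frattini_of_le_frattiniIn [FiniteDimensional F P] (hS : D.IsSubalgebra S)
    (hI : D.IsIdeal I) (hIS : I ≤ D.frattiniIn S) : I ≤ D.frattini := by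
  refine le_inf le_top (le_sInf fun M hM => ?_)
  by_contra hIM
  have hMI : M ⊔ I = ⊤ := (hM.2.2 _ (hM.1.sup_isIdeal hI) le_sup_left le_top).resolve_left
    fun h => hIM (le_sup_right.trans h.le)
  have hIS' : I ≤ S := hIS.trans inf_le_left
  have hS_eq : S = I ⊔ M ⊓ S := by
    rw [← sup_inf_assoc_of_le M hIS', sup_comm, hMI, top_inf_eq]
  rcases (inf_le_right : M ⊓ S ≤ S).lt_or_eq with hlt | heq
  · obtain ⟨N, hN, hMN⟩ := exists_isMaximalSubalgebraIn_of_lt (hM.1.inf hS) hlt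
    refine hN.2.1.not_ge ?_
    rw [hS_eq]
    exact sup_le (hIS.trans (inf_le_right.trans (sInf_le hN))) hMN
  · exact hIM (hIS'.trans (heq ▸ inf_le_left))

theorem phiIn_le_phi_of_isCompl [FiniteDimensional F P] (hB : D.IsIdeal B) (hC : D.IsIdeal C)
    (hBC : IsCompl B C) : D.phiIn B ≤ D.phi :=
  sSup_le fun _ ⟨hJ, hJF⟩ =>
    have hJ' := hJ.isIdeal_of_isCompl hB hC hBC
    le_sSup ⟨hJ', le_frattini_of_le_frattiniIn hB.isSubalgebra hJ' hJF⟩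

theorem inf_sup_le_phiIn_of_isCompl (hB : D.IsIdeal B) (hC : D.IsIdeal C) (hBC : IsCompl B C)
    (hI : D.IsIdeal I) (hIF : I ≤ D.frattini) : B ⊓ (I ⊔ C) ≤ D.phiIn B := by
  refine le_sSup ⟨(hI.sup hC).isIdealIn_inf hB.isSubalgebra, le_inf inf_le_left ?_⟩
  refine le_sInf fun M hM => ?_
  have hIM : I ≤ M ⊔ C := hIF.trans (inf_le_right.trans (sInf_le (hM.sup_of_isCompl hB hC hBC)))
  calc B ⊓ (I ⊔ C) ≤ B ⊓ (M ⊔ C) := inf_le_inf_left B (sup_le hIM le_sup_right)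
    _ = M := by rw [inf_comm, hBC.sup_inf_eq_of_le hM.2.1.le]

end Dialgebra

/-- The Frattini ideal of a direct sum of ideals is the (direct) sum of the Frattini
ideals of the summands. -/
theorem phi_direct_sum {F P : Type*} [Field F] [AddCommGroup P] [Module F P]
    [FiniteDimensional F P] (D : Dialgebra F P) (n : ℕ) (A : Fin n → Submodule F P)
    (hI : ∀ i, D.IsIdeal (A i)) (hInd : iSupIndep A)
    (hSup : ⨆ i, A i = ⊤) :
    D.phi = ⨆ i, D.phiIn (A i) := by
  let C i := ⨆ (j) (_ : j ≠ i), A j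
  have hC i : D.IsIdeal (C i) :=
    Dialgebra.isIdeal_iSup fun j => Dialgebra.isIdeal_iSup fun _ => hI j
  have hAC i : IsCompl (A i) (C i) :=
    ⟨hInd i, codisjoint_iff.2 (by rw [← iSup_split_single, hSup])⟩
  refine le_antisymm (sSup_le fun I ⟨hIideal, hIF⟩ => ?_)
    (iSup_le fun i => Dialgebra.phiIn_le_phi_of_isCompl (hI i) (hC i) (hAC i))
  calc I ≤ ⨆ i, A i ⊓ (I ⊔ C i) := Submodule.le_iSup_inf_sup_iSup_ne (hSup ▸ le_top)
    _ ≤ ⨆ i, D.phiIn (A i) :=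
      iSup_mono fun i => Dialgebra.inf_sup_le_phiIn_of_isCompl (hI i) (hC i) (hAC i) hIideal hIF
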